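/- Let μ = (μ_1,...,μ_n) with k = Σ μ_i, n = Σ i·μ_i, and let d > 2 be a divisor of n+2. Define a_μ(q) = (1/[n+1]_q) · [n+k choose k]_q · [k choose μ_1,...,μ_n]_q. If there is exactly one index j with μ_j ≡ 1 (mod d) and μ_i ≡ 0 (mod d) for all i ≠ j, then a_μ(ζ_d) = C((n+2)/d + (k-1)/d - 1, (k-1)/d) · multinomial((k-1)/d; ⌊μ_1/d⌋,...,⌊μ_n/d⌋), where ζ_d is a primitive d-th root of unity. -/

import Mathlib

/-!
At a primitive `d`-th root of unity `ζ`, Gaussian binomials obey the q-Lucas theorem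
`[d a + r choose d b + s]_ζ = C(a, b) · [r choose s]_ζ` for `r, s < d`. It comes from the
period relations `[m + d choose k]_ζ = [m choose k]_ζ` for `k < d` and
`[m + d choose k + d]_ζ = [m choose k + d]_ζ + [m choose k]_ζ`, which propagate along the
q-Pascal recursion from their case `m = 0`, i.e. from `[d choose s]_ζ = 0` for `0 < s < d`.

Writing `μ_i = d ν_i + δ_{ij}`, `k = d b + 1` and `n + 2 = d (c + 1)`, the q-multinomial
evaluates to `multinomial(ν)`, `[n + k choose k]_ζ` to `C(c + b, b) · [d - 1]_ζ`, and
`[n + 1]_ζ` to `[d - 1]_ζ`, which is nonzero and cancels.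
-/

open Polynomial in
/-- The Gaussian binomial coefficient `[n choose k]_q` as an integer polynomial in `q`,
defined via the `q`-Pascal recursion
`[n+1 choose k+1]_q = [n choose k]_q + q^{k+1}·[n choose k+1]_q`;
it equals `[n]_q!/([k]_q!·[n-k]_q!)`. -/
noncomputable def qbinom : ℕ → ℕ → Polynomial ℤ
  | _, 0 => 1
  | 0, _ + 1 => 0
  | n + 1, k + 1 => qbinom n k + X ^ (k + 1) * qbinom n (k + 1)


open Polynomial in
/-- The `q`-integer `[m]_q = 1 + q + ⋯ + q^{m-1}` as an integer polynomial. -/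
noncomputable def qnat (m : ℕ) : Polynomial ℤ := ∑ i ∈ Finset.range m, X ^ i

/-- The `q`-multinomial coefficient `[k choose μ_1,…,μ_n]_q = [k]_q!/([μ_1]_q!⋯[μ_n]_q!)`
(where `k = Σ μ_i`), written as a product of Gaussian binomials
`∏_i [μ_1+⋯+μ_i choose μ_i]_q`. -/
noncomputable def qmultinom (n : ℕ) (μ : Fin n → ℕ) : Polynomial ℤ :=
  ∏ i : Fin n, qbinom (∑ j ∈ Finset.univ.filter (fun j : Fin n => j ≤ i), μ j) (μ i)

open Polynomial

theorem qbinom_zero_right (n : ℕ) : qbinom n 0 = 1 := by cases n <;> rfl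

theorem qbinom_succ_succ (n k : ℕ) :
    qbinom (n + 1) (k + 1) = qbinom n k + X ^ (k + 1) * qbinom n (k + 1) := rfl

theorem qbinom_eq_zero_of_lt {n k : ℕ} (h : n < k) : qbinom n k = 0 := by
  induction n generalizing k with
  | zero => obtain ⟨k, rfl⟩ := Nat.exists_eq_succ_of_ne_zero h.ne'; rfl
  | succ n ih =>
    obtain ⟨k, rfl⟩ := Nat.exists_eq_succ_of_ne_zero (by omega : k ≠ 0)
    rw [qbinom_succ_succ, ih (by omega), ih (by omega), mul_zero, add_zero]

theorem qbinom_self (n : ℕ) : qbinom n n = 1 := by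
  induction n with
  | zero => rfl
  | succ n ih =>
    rw [qbinom_succ_succ, ih, qbinom_eq_zero_of_lt n.lt_succ_self, mul_zero, add_zero]

theorem qbinom_one_right (n : ℕ) : qbinom n 1 = qnat n := by
  induction n with
  | zero => simp [qnat, qbinom_eq_zero_of_lt]
  | succ n ih => rw [qbinom_succ_succ, qbinom_zero_right, ih, qnat, qnat, geom_sum_succ]; ring

theorem qbinom_succ_succ' (k m : ℕ) :
    qbinom (k + m + 1) (k + 1) = X ^ m * qbinom (k + m) k + qbinom (k + m) (k + 1) := by
  induction k generalizing m with
  | zero => simp [qbinom_one_right, qnat, geom_sum_succ', qbinom_zero_right]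
  | succ k ihk =>
    induction m with
    | zero => simp [qbinom_self, qbinom_eq_zero_of_lt]
    | succ m ihm =>
      have hk := ihk (m + 1)
      have p₁ := qbinom_succ_succ (k + m + 2) (k + 1)
      have p₂ := qbinom_succ_succ (k + m + 1) k
      have p₃ := qbinom_succ_succ (k + m + 1) (k + 1)
      linear_combination (norm := ring_nf) p₁ + hk + X ^ (k + 2) * ihm - X ^ (m + 1) * p₂ - p₃

theorem one_sub_X_pow_mul_qbinom (k m : ℕ) :
    (1 - X ^ (k + 1)) * qbinom (k + m + 1) (k + 1) = (1 - X ^ (k + m + 1)) * qbinom (k + m) k := by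
  have h₁ := qbinom_succ_succ (k + m) k
  have h₂ := qbinom_succ_succ' k m
  linear_combination h₁ - X ^ (k + 1) * h₂

theorem qmultinom_single {n : ℕ} (j : Fin n) (m : ℕ) : qmultinom n (Pi.single j m) = 1 := by
  refine Finset.prod_eq_one fun i _ => ?_
  by_cases h : i = j
  · subst h
    simp [Finset.sum_pi_single', qbinom_self]
  · simp [h, qbinom_zero_right]

theorem Nat.multinomial_eq_prod_choose {α : Type*} [LinearOrder α] (s : Finset α)
    (f : α → ℕ) :
    Nat.multinomial s f = ∏ i ∈ s, (∑ l ∈ s.filter (· ≤ i), f l).choose (f i) := by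
  induction s using Finset.induction_on_max with
  | empty => simp
  | insert a s ha ih =>
    have ha' : a ∉ s := fun h => lt_irrefl a (ha a h)
    rw [Nat.multinomial_insert ha', Finset.prod_insert ha', ih, Finset.filter_true_of_mem
      fun x hx => (Finset.mem_insert.mp hx).elim le_of_eq fun hx => (ha x hx).le,
      Finset.sum_insert ha']
    congr 1
    refine Finset.prod_congr rfl fun i hi => ?_
    rw [Finset.filter_insert, if_neg (ha i hi).not_ge]

theorem eq_mul_div_add_single {ι : Type*} [DecidableEq ι] {d : ℕ} {μ : ι → ℕ} {j : ι}
    (hj : μ j % d = 1) (hoth : ∀ i, i ≠ j → μ i % d = 0) :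
    μ = fun i => d * (μ i / d) + (Pi.single j 1 : ι → ℕ) i := by
  funext i
  conv_lhs => rw [← Nat.div_add_mod (μ i) d]
  by_cases h : i = j
  · subst h; simp [hj]
  · simp [h, hoth i h]

namespace IsPrimitiveRoot

variable {R : Type*} [CommRing R] {ζ : R} {d : ℕ}

theorem aeval_qnat_ne_zero (hζ : IsPrimitiveRoot ζ d) {m : ℕ} (hm₀ : m ≠ 0) (hm : m < d) :
    aeval ζ (qnat m) ≠ 0 := by
  intro h
  have hgeom := mul_neg_geom_sum ζ m
  simp only [qnat, map_sum, map_pow, aeval_X] at h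
  rw [h, mul_zero, eq_comm, sub_eq_zero] at hgeom
  exact hζ.pow_ne_one_of_pos_of_lt hm₀ hm hgeom.symm

theorem aeval_qbinom_eq_zero [IsDomain R] (hζ : IsPrimitiveRoot ζ d) {s : ℕ} (hs₀ : s ≠ 0)
    (hs : s < d) : aeval ζ (qbinom d s) = 0 := by
  obtain ⟨k, rfl⟩ := Nat.exists_eq_succ_of_ne_zero hs₀
  obtain ⟨m, rfl⟩ : ∃ m, d = k + m + 1 := ⟨d - k - 1, by omega⟩
  have h := congrArg (aeval ζ) (one_sub_X_pow_mul_qbinom k m)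
  simp only [map_mul, map_sub, map_one, map_pow, aeval_X, hζ.pow_eq_one, sub_self,
    zero_mul] at h
  exact (mul_eq_zero.mp h).resolve_left (sub_ne_zero.mpr (hζ.pow_ne_one_of_pos_of_lt
    k.succ_ne_zero hs).symm)

theorem aeval_qbinom_add_period [IsDomain R] (hζ : IsPrimitiveRoot ζ d) (hd : d ≠ 0) (n : ℕ) :
    (∀ k < d, aeval ζ (qbinom (n + d) k) = aeval ζ (qbinom n k)) ∧
      ∀ k, aeval ζ (qbinom (n + d) (k + d)) =
        aeval ζ (qbinom n (k + d)) + aeval ζ (qbinom n k) := by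
  have pascal (m k : ℕ) : aeval ζ (qbinom (m + 1) (k + 1)) =
      aeval ζ (qbinom m k) + ζ ^ (k + 1) * aeval ζ (qbinom m (k + 1)) := by
    simp [qbinom_succ_succ]
  obtain ⟨e, rfl⟩ : ∃ e, d = e + 1 := ⟨d - 1, by omega⟩
  have hζe : ζ ^ (e + 1) = 1 := hζ.pow_eq_one
  induction n with
  | zero =>
    refine ⟨fun k hk => ?_, fun k => ?_⟩
    · rcases k with _ | k
      · simp [qbinom_zero_right]
      · rw [zero_add, hζ.aeval_qbinom_eq_zero k.succ_ne_zero hk, qbinom_eq_zero_of_lt k.succ_pos,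
          map_zero]
    · rcases k with _ | k
      · simp [qbinom_self, qbinom_eq_zero_of_lt]
      · simp [qbinom_eq_zero_of_lt]
  | succ n ih =>
    obtain ⟨ih₁, ih₂⟩ := ih
    refine ⟨fun k hk => ?_, fun k => ?_⟩
    · rcases k with _ | k
      · simp [qbinom_zero_right]
      · rw [add_right_comm, pascal, pascal, ih₁ k (by omega), ih₁ (k + 1) hk]
    · rcases k with _ | k
      · have h₁ := pascal (n + (e + 1)) e
        have h₂ := pascal n e
        have h₃ := ih₂ 0
        have h₄ := ih₁ e (by omega)
        simp only [qbinom_zero_right, map_one] at h₃ ⊢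
        linear_combination (norm := ring_nf) h₁ - h₂ + ζ ^ (e + 1) * h₃ + h₄ + hζe
      · have h₁ := pascal (n + (e + 1)) (k + e + 1)
        have h₂ := pascal n (k + e + 1)
        have h₃ := pascal n k
        have h₄ := ih₂ k
        have h₅ := ih₂ (k + 1)
        linear_combination (norm := ring_nf) h₁ - h₂ - h₃ + h₄ + ζ ^ (k + e + 2) * h₅
          + ζ ^ (k + 1) * aeval ζ (qbinom n (k + 1)) * hζe

theorem aeval_qbinom_mul_add [IsDomain R] (hζ : IsPrimitiveRoot ζ d) {r s : ℕ} (hr : r < d)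
    (hs : s < d) (a b : ℕ) :
    aeval ζ (qbinom (d * a + r) (d * b + s)) = a.choose b * aeval ζ (qbinom r s) := by
  have hd : d ≠ 0 := by omega
  induction a generalizing b with
  | zero =>
    rcases b with _ | b
    · simp
    · rw [qbinom_eq_zero_of_lt (by nlinarith)]
      simp
  | succ a ih =>
    rw [show d * (a + 1) + r = d * a + r + d by ring]
    rcases b with _ | b
    · have h₀ := ih 0
      rw [mul_zero, zero_add] at h₀ ⊢
      rw [(hζ.aeval_qbinom_add_period hd _).1 s hs, h₀]
      simp
    · have h₁ := ih (b + 1)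
      rw [show d * (b + 1) + s = d * b + s + d by ring] at h₁ ⊢
      rw [(hζ.aeval_qbinom_add_period hd _).2, h₁, ih b, Nat.choose_succ_succ', Nat.cast_add]
      ring

theorem aeval_qmultinom_mul_add [IsDomain R] (hζ : IsPrimitiveRoot ζ d) {n : ℕ}
    (ν e : Fin n → ℕ) (he : ∑ i, e i < d) :
    aeval ζ (qmultinom n fun i => d * ν i + e i) =
      Nat.multinomial Finset.univ ν * aeval ζ (qmultinom n e) := by
  simp only [qmultinom, map_prod, Finset.sum_add_distrib, ← Finset.mul_sum]
  rw [Nat.multinomial_eq_prod_choose, Nat.cast_prod, ← Finset.prod_mul_distrib]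
  refine Finset.prod_congr rfl fun i _ => hζ.aeval_qbinom_mul_add ?_ ?_ _ _
  · exact (Finset.sum_le_sum_of_subset (Finset.filter_subset _ _)).trans_lt he
  · exact (Finset.single_le_sum (fun _ _ => Nat.zero_le _) (Finset.mem_univ i)).trans_lt he

end IsPrimitiveRoot

theorem stmt3_general (n k d : ℕ) (μ : Fin n → ℕ)
    (hk : k = ∑ i, μ i)
    (hd : d ∣ n + 2) (hd2 : 2 < d)
    (j : Fin n) (hj : μ j % d = 1) (hoth : ∀ i : Fin n, i ≠ j → μ i % d = 0)
    (ζ : ℂ) (hζ : IsPrimitiveRoot ζ d)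
    (P : Polynomial ℤ) (hP : qnat (n + 1) * P = qbinom (n + k) k * qmultinom n μ) :
    Polynomial.aeval ζ P =
      ((Nat.choose ((n + 2) / d + (k - 1) / d - 1) ((k - 1) / d) *
        Nat.multinomial Finset.univ (fun i => μ i / d) : ℕ) : ℂ) := by
  have hμ := eq_mul_div_add_single hj hoth
  set ν : Fin n → ℕ := fun i => μ i / d
  set b := ∑ i, ν i
  have hkb : k = d * b + 1 := by
    rw [hk, hμ]
    simp [b, ν, Finset.sum_add_distrib, Finset.mul_sum]
  obtain ⟨c, hc⟩ := hd
  obtain ⟨c, rfl⟩ := Nat.exists_eq_add_one_of_ne_zero (show c ≠ 0 by rintro rfl; simp at hc)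
  have hquot₁ : (n + 2) / d = c + 1 := by rw [hc, Nat.mul_div_cancel_left _ (by omega)]
  have hquot₂ : (k - 1) / d = b := by
    rw [hkb, Nat.add_sub_cancel, Nat.mul_div_cancel_left _ (by omega)]
  rw [mul_add_one] at hc
  have hn1 : n + 1 = d * c + (d - 1) := by omega
  have hnk : n + k = d * (c + b) + (d - 1) := by rw [mul_add]; omega
  have hqnat : aeval ζ (qnat (n + 1)) = aeval ζ (qnat (d - 1)) := by
    simpa [hn1, qbinom_one_right] using
      hζ.aeval_qbinom_mul_add (by omega : d - 1 < d) (by omega : 1 < d) c 0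
  have hqbinom : aeval ζ (qbinom (n + k) k) = (c + b).choose b * aeval ζ (qnat (d - 1)) := by
    rw [hnk, hkb, hζ.aeval_qbinom_mul_add (by omega) (by omega), qbinom_one_right]
  have hqmultinom : aeval ζ (qmultinom n μ) = Nat.multinomial Finset.univ ν := by
    rw [hμ, hζ.aeval_qmultinom_mul_add ν _ (by simpa using hd2.trans' one_lt_two),
      qmultinom_single, map_one, mul_one]
  have key := congrArg (aeval ζ) hP
  simp only [map_mul, hqnat, hqbinom, hqmultinom] at key
  rw [hquot₁, hquot₂, show c + 1 + b - 1 = c + b by omega]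
  apply mul_left_cancel₀ (hζ.aeval_qnat_ne_zero (by omega : d - 1 ≠ 0) (by omega))
  push_cast
  linear_combination key

/-- for `d > 2` dividing `n+2`, if exactly one index `j` has
`μ_j ≡ 1 (mod d)` and `μ_i ≡ 0 (mod d)` for `i ≠ j`, then the polynomial
`a_μ(q)` (characterized by `[n+1]_q·a_μ(q) = [n+k choose k]_q·[k choose μ]_q`)
evaluates at a primitive `d`-th root of unity `ζ_d` to
`C((n+2)/d + (k-1)/d - 1, (k-1)/d)·multinomial((k-1)/d; ⌊μ_1/d⌋,…,⌊μ_n/d⌋)`. -/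
theorem stmt3 (n k d : ℕ) (μ : Fin n → ℕ)
    (hk : k = ∑ i, μ i) (hn : n = ∑ i, (i.val + 1) * μ i)
    (hd : d ∣ n + 2) (hd2 : 2 < d)
    (j : Fin n) (hj : μ j % d = 1) (hoth : ∀ i : Fin n, i ≠ j → μ i % d = 0)
    (ζ : ℂ) (hζ : IsPrimitiveRoot ζ d)
    (P : Polynomial ℤ) (hP : qnat (n + 1) * P = qbinom (n + k) k * qmultinom n μ) :
    Polynomial.aeval ζ P =
      ((Nat.choose ((n + 2) / d + (k - 1) / d - 1) ((k - 1) / d) *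
        Nat.multinomial Finset.univ (fun i => μ i / d) : ℕ) : ℂ) :=
  stmt3_general n k d μ hk hd hd2 j hj hoth ζ hζ P hP
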